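/- Let U ⊆ ℂ be a nonempty connected open set and let f, g : ℂ → ℂ be holomorphic on U with f'(z) ≠ 0 and g'(z) ≠ 0 for all z ∈ U. If S(f)(z) = S(g)(z) for every z ∈ U, then f and g differ by postcomposition with a Möbius transformation: there exist a, b, c, d ∈ ℂ with a·d − b·c ≠ 0 such that c·g(z) + d ≠ 0 and f(z) = (a·g(z) + b)/(c·g(z) + d) for all z ∈ U. -/

import Mathlib

/-!
Write `P f = f'' / f'` for the pre-Schwarzian, so that `S f = (P f)' - (P f)² / 2`. This gives the
chain rule `S (F ∘ g) = (S F ∘ g) · g'² + S g`, and since Möbius maps have `S = 0`, postcomposing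
with one does not change `S`. Pick a Möbius map `M` such that `k = M ∘ g` agrees with `f` to second
order at a point `z₀`. When `S f = S k`, the quantity `(P f - P k)² / (f' k')` has zero derivative,
so `P f = P k` near `z₀`; then `f' / k'` and `f - k` are constant there, and `f = M ∘ g` near `z₀`.
The identity theorem, applied to `f · (c g + d) - (a g + b)`, extends this to all of `U`, and
`a d - b c ≠ 0` prevents `c g + d` from vanishing.
-/

/-- The Schwarzian derivative of `f` at `z`:
`S(f)(z) = f'''(z)/f'(z) - (3/2) * (f''(z)/f'(z))^2`. -/
noncomputable def schwarzian (f : ℂ → ℂ) (z : ℂ) : ℂ :=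
  iteratedDeriv 3 f z / deriv f z - (3 / 2) * (iteratedDeriv 2 f z / deriv f z) ^ 2

open Filter Topology Set

noncomputable def preSchwarzian (f : ℂ → ℂ) : ℂ → ℂ := logDeriv (deriv f)

section Schwarzian

variable {f g F : ℂ → ℂ} {z : ℂ}

theorem preSchwarzian_apply (f : ℂ → ℂ) (z : ℂ) :
    preSchwarzian f z = deriv (deriv f) z / deriv f z := rfl

theorem schwarzian_eq_deriv (f : ℂ → ℂ) (z : ℂ) :
    schwarzian f z = deriv (deriv (deriv f)) z / deriv f z
      - 3 / 2 * (deriv (deriv f) z / deriv f z) ^ 2 := by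
  simp only [schwarzian, iteratedDeriv_eq_iterate, Function.iterate_succ_apply,
    Function.iterate_zero_apply]

theorem hasDerivAt_preSchwarzian (hf : AnalyticAt ℂ f z) (hf' : deriv f z ≠ 0) :
    HasDerivAt (preSchwarzian f) (schwarzian f z + preSchwarzian f z ^ 2 / 2) z := by
  refine (hf.deriv.deriv.differentiableAt.hasDerivAt.div
    hf.deriv.differentiableAt.hasDerivAt hf').congr_deriv ?_
  rw [schwarzian_eq_deriv, preSchwarzian_apply]
  field_simp
  ring

theorem schwarzian_eq_deriv_preSchwarzian (hf : AnalyticAt ℂ f z) (hf' : deriv f z ≠ 0) :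
    schwarzian f z = deriv (preSchwarzian f) z - preSchwarzian f z ^ 2 / 2 := by
  rw [(hasDerivAt_preSchwarzian hf hf').deriv]
  ring

theorem deriv_comp_eventuallyEq (hF : AnalyticAt ℂ F (g z)) (hg : AnalyticAt ℂ g z) :
    deriv (F ∘ g) =ᶠ[𝓝 z] fun w => deriv F (g w) * deriv g w := by
  filter_upwards [hg.continuousAt.eventually hF.eventually_analyticAt,
    hg.eventually_analyticAt] with w hFw hgw
  exact deriv_comp w hFw.differentiableAt hgw.differentiableAt

theorem preSchwarzian_comp (hF : AnalyticAt ℂ F (g z)) (hF' : deriv F (g z) ≠ 0)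
    (hg : AnalyticAt ℂ g z) (hg' : deriv g z ≠ 0) :
    preSchwarzian (F ∘ g) z = preSchwarzian F (g z) * deriv g z + preSchwarzian g z := by
  rw [preSchwarzian, (logDeriv_congr_nhds (deriv_comp_eventuallyEq hF hg)).eq_of_nhds,
    logDeriv_mul (f := fun w => deriv F (g w)) z hF' hg'
      (hF.deriv.differentiableAt.comp z hg.differentiableAt) hg.deriv.differentiableAt]
  exact congrArg (· + _) (logDeriv_comp hF.deriv.differentiableAt hg.differentiableAt)

theorem schwarzian_comp (hF : AnalyticAt ℂ F (g z)) (hF' : deriv F (g z) ≠ 0)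
    (hg : AnalyticAt ℂ g z) (hg' : deriv g z ≠ 0) :
    schwarzian (F ∘ g) z = schwarzian F (g z) * deriv g z ^ 2 + schwarzian g z := by
  have hchain : preSchwarzian (F ∘ g) =ᶠ[𝓝 z]
      fun w => preSchwarzian F (g w) * deriv g w + preSchwarzian g w := by
    filter_upwards [hg.continuousAt.eventually hF.eventually_analyticAt,
      hg.continuousAt.eventually (hF.deriv.continuousAt.eventually_ne hF'),
      hg.eventually_analyticAt, hg.deriv.continuousAt.eventually_ne hg'] with w hFw hFw' hgw hgw'
    exact preSchwarzian_comp hFw hFw' hgw hgw'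
  have hd : HasDerivAt (fun w => preSchwarzian F (g w) * deriv g w + preSchwarzian g w) _ z :=
    (((hasDerivAt_preSchwarzian hF hF').comp z hg.differentiableAt.hasDerivAt).mul
      hg.deriv.differentiableAt.hasDerivAt).add (hasDerivAt_preSchwarzian hg hg')
  have hFg' : deriv (F ∘ g) z ≠ 0 := by
    rw [deriv_comp z hF.differentiableAt hg.differentiableAt]
    exact mul_ne_zero hF' hg'
  rw [schwarzian_eq_deriv_preSchwarzian (hF.comp hg) hFg', hchain.deriv_eq, hd.deriv,
    hchain.eq_of_nhds]
  simp only [Function.comp_apply, preSchwarzian_apply]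
  field_simp
  ring

end Schwarzian

noncomputable def moebius (a b c d : ℂ) (w : ℂ) : ℂ := (a * w + b) / (c * w + d)

section Moebius

variable {a b c d w z : ℂ} {g : ℂ → ℂ}

theorem hasDerivAt_moebius (hw : c * w + d ≠ 0) :
    HasDerivAt (moebius a b c d) ((a * d - b * c) / (c * w + d) ^ 2) w := by
  refine ((((hasDerivAt_id w).const_mul a).add_const b).div
    (((hasDerivAt_id w).const_mul c).add_const d) hw).congr_deriv ?_
  simp only [id]
  ring

theorem analyticAt_moebius (hw : c * w + d ≠ 0) : AnalyticAt ℂ (moebius a b c d) w := by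
  unfold moebius
  fun_prop (disch := exact hw)

theorem deriv_moebius_ne_zero (hΔ : a * d - b * c ≠ 0) (hw : c * w + d ≠ 0) :
    deriv (moebius a b c d) w ≠ 0 := by
  rw [(hasDerivAt_moebius hw).deriv]
  exact div_ne_zero hΔ (pow_ne_zero 2 hw)

theorem preSchwarzian_moebius (hΔ : a * d - b * c ≠ 0) (hw : c * w + d ≠ 0) :
    preSchwarzian (moebius a b c d) w = -2 * c / (c * w + d) := by
  have hderiv : deriv (moebius a b c d) =ᶠ[𝓝 w] fun v => (a * d - b * c) / (c * v + d) ^ 2 := by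
    filter_upwards [(by fun_prop : Continuous fun v => c * v + d).continuousAt.eventually_ne hw]
      with v hv
    exact (hasDerivAt_moebius hv).deriv
  have hd : HasDerivAt (fun v => (a * d - b * c) / (c * v + d) ^ 2)
      (-2 * c * (a * d - b * c) / (c * w + d) ^ 3) w := by
    refine ((hasDerivAt_const w (a * d - b * c)).fun_div
      ((((hasDerivAt_id w).const_mul c).add_const d).fun_pow 2) (pow_ne_zero 2 hw)).congr_deriv ?_
    simp only [id]
    field_simp
    ring
  rw [preSchwarzian_apply, hderiv.deriv_eq, hd.deriv, hderiv.eq_of_nhds]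
  generalize a * d - b * c = Δ at hΔ ⊢
  field_simp

theorem schwarzian_moebius (hΔ : a * d - b * c ≠ 0) (hw : c * w + d ≠ 0) :
    schwarzian (moebius a b c d) w = 0 := by
  have hpre : preSchwarzian (moebius a b c d) =ᶠ[𝓝 w] fun v => -2 * c / (c * v + d) := by
    filter_upwards [(by fun_prop : Continuous fun v => c * v + d).continuousAt.eventually_ne hw]
      with v hv
    exact preSchwarzian_moebius hΔ hv
  have hd : HasDerivAt (fun v => -2 * c / (c * v + d)) (2 * c ^ 2 / (c * w + d) ^ 2) w := by
    refine ((hasDerivAt_const w (-2 * c)).fun_div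
      (((hasDerivAt_id w).const_mul c).add_const d) hw).congr_deriv ?_
    simp only [id]
    field_simp
    ring
  rw [schwarzian_eq_deriv_preSchwarzian (analyticAt_moebius hw) (deriv_moebius_ne_zero hΔ hw),
    hpre.deriv_eq, hd.deriv, hpre.eq_of_nhds]
  field_simp
  ring

theorem schwarzian_moebius_comp (hΔ : a * d - b * c ≠ 0)
    (hg : AnalyticAt ℂ g z) (hg' : deriv g z ≠ 0) (hz : c * g z + d ≠ 0) :
    schwarzian (moebius a b c d ∘ g) z = schwarzian g z := by
  rw [schwarzian_comp (analyticAt_moebius hz) (deriv_moebius_ne_zero hΔ hz) hg hg',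
    schwarzian_moebius hΔ hz, zero_mul, zero_add]

theorem deriv_moebius_comp_ne_zero (hΔ : a * d - b * c ≠ 0)
    (hg : DifferentiableAt ℂ g z) (hg' : deriv g z ≠ 0) (hz : c * g z + d ≠ 0) :
    deriv (moebius a b c d ∘ g) z ≠ 0 := by
  rw [deriv_comp z (analyticAt_moebius hz).differentiableAt hg]
  exact mul_ne_zero (deriv_moebius_ne_zero hΔ hz) hg'

theorem moebius_eq_of_mul_sub_eq_zero {x : ℂ} (hΔ : a * d - b * c ≠ 0)
    (h : w * (c * x + d) - (a * x + b) = 0) :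
    c * x + d ≠ 0 ∧ w = moebius a b c d x := by
  have he : c * x + d ≠ 0 := by
    intro he
    have hnum : a * x + b = 0 := by linear_combination w * he - h
    exact hΔ (by linear_combination a * he - c * hnum)
  exact ⟨he, (eq_div_iff he).mpr (by linear_combination h)⟩

end Moebius

section Uniqueness

variable {f k : ℂ → ℂ} {W : Set ℂ} {z₀ : ℂ}

theorem eqOn_preSchwarzian_of_eqOn_schwarzian (hW : IsOpen W) (hWc : IsPreconnected W)
    (hf : DifferentiableOn ℂ f W) (hk : DifferentiableOn ℂ k W)
    (hf' : ∀ z ∈ W, deriv f z ≠ 0) (hk' : ∀ z ∈ W, deriv k z ≠ 0)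
    (hS : EqOn (schwarzian f) (schwarzian k) W) (hz₀ : z₀ ∈ W)
    (h₀ : preSchwarzian f z₀ = preSchwarzian k z₀) :
    EqOn (preSchwarzian f) (preSchwarzian k) W := by
  set Q : ℂ → ℂ := fun z =>
    (preSchwarzian f z - preSchwarzian k z) ^ 2 / (deriv f z * deriv k z)
  have hQ : ∀ z ∈ W, HasDerivAt Q 0 z := by
    intro z hz
    have hfa := hf.analyticOnNhd hW z hz
    have hka := hk.analyticOnNhd hW z hz
    refine ((((hasDerivAt_preSchwarzian hfa (hf' z hz)).sub
      (hasDerivAt_preSchwarzian hka (hk' z hz))).fun_pow 2).fun_div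
      (hfa.deriv.differentiableAt.hasDerivAt.mul hka.deriv.differentiableAt.hasDerivAt)
      (mul_ne_zero (hf' z hz) (hk' z hz))).congr_deriv ?_
    have hfz := hf' z hz
    have hkz := hk' z hz
    rw [hS hz]
    simp only [Pi.sub_apply, Pi.mul_apply, preSchwarzian_apply, Nat.cast_ofNat,
      Nat.add_one_sub_one, pow_one]
    field_simp
    ring
  intro z hz
  have hconst : Q z = Q z₀ := hW.is_const_of_deriv_eq_zero hWc
    (fun w hw => (hQ w hw).differentiableAt.differentiableWithinAt)
    (fun w hw => (hQ w hw).deriv) hz hz₀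
  simpa [Q, h₀, sub_eq_zero, hf' z hz, hk' z hz] using hconst

theorem eqOn_of_eqOn_schwarzian (hW : IsOpen W) (hWc : IsPreconnected W)
    (hf : DifferentiableOn ℂ f W) (hk : DifferentiableOn ℂ k W)
    (hf' : ∀ z ∈ W, deriv f z ≠ 0) (hk' : ∀ z ∈ W, deriv k z ≠ 0)
    (hS : EqOn (schwarzian f) (schwarzian k) W) (hz₀ : z₀ ∈ W) (h₀ : f z₀ = k z₀)
    (h₁ : deriv f z₀ = deriv k z₀) (h₂ : preSchwarzian f z₀ = preSchwarzian k z₀) :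
    EqOn f k W := by
  obtain ⟨μ, -, hμ⟩ := (logDeriv_eqOn_iff (hf.deriv hW) (hk.deriv hW) hW hWc hk' hf').mp
    (eqOn_preSchwarzian_of_eqOn_schwarzian hW hWc hf hk hf' hk' hS hz₀ h₂)
  have hμ₁ : μ = 1 := by
    have := hμ hz₀
    rw [Pi.smul_apply, smul_eq_mul, h₁] at this
    exact (mul_eq_right₀ (hk' z₀ hz₀)).mp this.symm
  refine hW.eqOn_of_deriv_eq hWc hf hk (fun z hz => ?_) hz₀ h₀
  simpa [hμ₁] using hμ hz

end Uniqueness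

theorem exists_moebius_comp_jet_eq {f g : ℂ → ℂ} {z : ℂ} (hg : AnalyticAt ℂ g z)
    (hg' : deriv g z ≠ 0) (hf' : deriv f z ≠ 0) :
    ∃ a b c d : ℂ, a * d - b * c ≠ 0 ∧ c * g z + d ≠ 0 ∧ (moebius a b c d ∘ g) z = f z ∧
      deriv (moebius a b c d ∘ g) z = deriv f z ∧
      preSchwarzian (moebius a b c d ∘ g) z = preSchwarzian f z := by
  obtain ⟨m, hm⟩ : ∃ m, m * deriv g z = deriv f z := ⟨_, div_mul_cancel₀ _ hg'⟩
  obtain ⟨c, hc⟩ : ∃ c, 2 * c * deriv g z = preSchwarzian g z - preSchwarzian f z :=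
    ⟨(preSchwarzian g z - preSchwarzian f z) / (2 * deriv g z), by field_simp⟩
  set a := m + c * f z
  set b := f z - a * g z
  set d := 1 - c * g z
  have hΔ : a * d - b * c = m := by ring
  have he : c * g z + d = 1 := by ring
  have hΔ₀ : a * d - b * c ≠ 0 := hΔ ▸ left_ne_zero_of_mul (hm ▸ hf')
  have he₀ : c * g z + d ≠ 0 := he ▸ one_ne_zero
  refine ⟨a, b, c, d, hΔ₀, he₀, ?_, ?_, ?_⟩
  · simp only [Function.comp_apply, moebius, he, div_one, b]
    ring
  · rw [deriv_comp z (analyticAt_moebius he₀).differentiableAt hg.differentiableAt,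
      (hasDerivAt_moebius he₀).deriv, hΔ, he, one_pow, div_one, hm]
  · rw [preSchwarzian_comp (analyticAt_moebius he₀) (deriv_moebius_ne_zero hΔ₀ he₀) hg hg',
      preSchwarzian_moebius hΔ₀ he₀, he]
    linear_combination -hc

theorem exists_moebius_comp_eventuallyEq {U : Set ℂ} {f g : ℂ → ℂ} {z₀ : ℂ} (hU : IsOpen U)
    (hz₀ : z₀ ∈ U) (hf : DifferentiableOn ℂ f U) (hf' : ∀ z ∈ U, deriv f z ≠ 0)
    (hg : DifferentiableOn ℂ g U) (hg' : ∀ z ∈ U, deriv g z ≠ 0)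
    (hS : EqOn (schwarzian f) (schwarzian g) U) :
    ∃ a b c d : ℂ, a * d - b * c ≠ 0 ∧
      ∀ᶠ z in 𝓝 z₀, c * g z + d ≠ 0 ∧ f z = moebius a b c d (g z) := by
  have hga := hg.analyticOnNhd hU
  obtain ⟨a, b, c, d, hΔ, he₀, h₀, h₁, h₂⟩ :=
    exists_moebius_comp_jet_eq (f := f) (hga z₀ hz₀) (hg' z₀ hz₀) (hf' z₀ hz₀)
  have hcont : ContinuousAt (fun z => c * g z + d) z₀ := by
    have := (hga z₀ hz₀).continuousAt
    fun_prop
  obtain ⟨r, hr, hball⟩ := Metric.eventually_nhds_iff_ball.mp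
    ((hU.eventually_mem hz₀).and (hcont.eventually_ne he₀))
  have hsub : Metric.ball z₀ r ⊆ U := fun z hz => (hball z hz).1
  have he : ∀ z ∈ Metric.ball z₀ r, c * g z + d ≠ 0 := fun z hz => (hball z hz).2
  have hloc : EqOn f (moebius a b c d ∘ g) (Metric.ball z₀ r) :=
    eqOn_of_eqOn_schwarzian Metric.isOpen_ball (convex_ball z₀ r).isPreconnected (hf.mono hsub)
      (fun z hz => ((analyticAt_moebius (he z hz)).comp (hga z (hsub hz))).differentiableWithinAt)
      (fun z hz => hf' z (hsub hz))
      (fun z hz => deriv_moebius_comp_ne_zero hΔ (hga z (hsub hz)).differentiableAt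
        (hg' z (hsub hz)) (he z hz))
      (fun z hz => (hS (hsub hz)).trans
        (schwarzian_moebius_comp hΔ (hga z (hsub hz)) (hg' z (hsub hz)) (he z hz)).symm)
      (Metric.mem_ball_self hr) h₀.symm h₁.symm h₂.symm
  exact ⟨a, b, c, d, hΔ, Metric.eventually_nhds_iff_ball.mpr
    ⟨r, hr, fun z hz => ⟨he z hz, hloc hz⟩⟩⟩

/-- Two holomorphic functions with nonvanishing derivative and equal Schwarzian
derivatives on a nonempty connected open set differ by postcomposition with a
Möbius transformation. -/
theorem moebius_postcomp_of_schwarzian_eq (U : Set ℂ) (hU : IsOpen U)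
    (hUc : IsConnected U) (hUne : U.Nonempty)
    (f g : ℂ → ℂ)
    (hf : DifferentiableOn ℂ f U) (hf' : ∀ z ∈ U, deriv f z ≠ 0)
    (hg : DifferentiableOn ℂ g U) (hg' : ∀ z ∈ U, deriv g z ≠ 0)
    (hS : ∀ z ∈ U, schwarzian f z = schwarzian g z) :
    ∃ a b c d : ℂ, a * d - b * c ≠ 0 ∧
      ∀ z ∈ U, c * g z + d ≠ 0 ∧ f z = (a * g z + b) / (c * g z + d) := by
  obtain ⟨z₀, hz₀⟩ := hUne
  obtain ⟨a, b, c, d, hΔ, hloc⟩ := exists_moebius_comp_eventuallyEq hU hz₀ hf hf' hg hg' hS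
  have hga := hg.analyticOnNhd hU
  have hana : AnalyticOnNhd ℂ (fun z => f z * (c * g z + d) - (a * g z + b)) U :=
    ((hf.analyticOnNhd hU).mul ((analyticOnNhd_const.mul hga).add analyticOnNhd_const)).sub
      ((analyticOnNhd_const.mul hga).add analyticOnNhd_const)
  have hrel : EqOn (fun z => f z * (c * g z + d) - (a * g z + b)) 0 U := by
    refine hana.eqOn_zero_of_preconnected_of_eventuallyEq_zero hUc.isPreconnected hz₀ ?_
    filter_upwards [hloc] with z ⟨he, hfz⟩
    rw [hfz, moebius, div_mul_cancel₀ _ he, sub_self, Pi.zero_apply]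
  exact ⟨a, b, c, d, hΔ, fun z hz => moebius_eq_of_mul_sub_eq_zero hΔ (hrel hz)⟩
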